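/- Let L/K be a finite Galois extension of degree n with Galois group G and let σ ∈ G have even multiplicative order 2r > 2. Then for every nonzero b ∈ L, the alternating K-bilinear form f_{b,σ} has rank either n − n/r or n, and both ranks occur for suitable choices of nonzero b. -/

import Mathlib

/-!
By nondegeneracy of the trace form, the radical of `f_{b,σ}` is `{x | b x = σ(b) σ²(x)}`. If it
contains some `x₀ ≠ 0`, it is `F x₀`, where `F` is the fixed field of `σ²`; since `[L : F] = r`
this has dimension `n / r`, and `b = 1` is such a case. Applying `N_{L/F}` to `b x₀ = σ(b) σ²(x₀)`
shows that a nonzero radical forces `N_{L/F}(b)` to be fixed by `σ`. Since `σ` has even order,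
`σ ∉ ⟨σ²⟩`, so some `d ∈ F` is moved by `σ`. Over a finite field the norm is surjective, so
`N_{L/F}(b) = d` for some `b`. Over an infinite `K`, take `z` with `Tr_{L/F}(z) = d`: the norm
`N_{L/F}(t + z)` is a monic polynomial in `t` with next coefficient `d`, so it is not `σ`-fixed for
some `t ∈ K`.
-/

variable {K L : Type*} [Field K] [Field L] [Algebra K L]

/-- The alternating bilinear form `f_{b,σ}(x,y) = Tr^L_K (b * (x * σ y - σ x * y))`,
where `Tr^L_K` is the trace form of the extension `L/K`. -/
noncomputable def galoisAltForm (b : L) (σ : L ≃ₐ[K] L) : (L →ₗ[K] L →ₗ[K] K) :=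
  LinearMap.mk₂ K (fun x y => Algebra.trace K L (b * (x * σ y - σ x * y)))
    (fun x x' y => by
      try dsimp only
      rw [show b * ((x + x') * σ y - σ (x + x') * y)
            = b * (x * σ y - σ x * y) + b * (x' * σ y - σ x' * y) by
          rw [map_add σ]; ring, map_add])
    (fun a x y => by
      try dsimp only
      rw [show b * ((a • x) * σ y - σ (a • x) * y)
            = a • (b * (x * σ y - σ x * y)) by
          rw [map_smul σ]
          simp only [smul_sub, smul_mul_assoc, mul_smul_comm, mul_sub], map_smul])
    (fun x y y' => by
      try dsimp only
      rw [show b * (x * σ (y + y') - σ x * (y + y'))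
            = b * (x * σ y - σ x * y) + b * (x * σ y' - σ x * y') by
          rw [map_add σ]; ring, map_add])
    (fun a x y => by
      try dsimp only
      rw [show b * (x * σ (a • y) - σ x * (a • y))
            = a • (b * (x * σ y - σ x * y)) by
          rw [map_smul σ]
          simp only [smul_sub, smul_mul_assoc, mul_smul_comm, mul_sub], map_smul])

/-- The rank of a bilinear form on `L`: `dim_K L` minus the dimension of its radical
`{x : L | ∀ y, f x y = 0}` (which is the kernel of `f` viewed as a map `L →ₗ[K] (L →ₗ[K] K)`). -/
noncomputable def formRank (f : (L →ₗ[K] L →ₗ[K] K)) : ℕ :=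
  Module.finrank K L - Module.finrank K (LinearMap.ker f)

open Finset Polynomial IntermediateField

theorem notMem_zpowers_sq_of_even_orderOf {G : Type*} [Group G] {g : G}
    (hg : Even (orderOf g)) : g ∉ Subgroup.zpowers (g ^ 2) := by
  rintro ⟨k, hk : (g ^ 2) ^ k = g⟩
  have hpow : g ^ (2 * k - 1) = 1 := by
    rw [zpow_sub_one, zpow_mul, zpow_ofNat, hk, mul_inv_cancel]
  obtain ⟨m, hm⟩ := hg
  have hdvd : (2 : ℤ) ∣ 2 * k - 1 :=
    (Dvd.intro (m : ℤ) (by rw [hm]; push_cast; ring)).trans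
      (orderOf_dvd_iff_zpow_eq_one.mpr hpow)
  omega

section FixedFieldZPowers

theorem mem_fixedField_zpowers_iff (τ : L ≃ₐ[K] L) (x : L) :
    x ∈ fixedField (Subgroup.zpowers τ) ↔ τ x = x := by
  rw [mem_fixedField_iff]
  refine ⟨fun h ↦ h τ (Subgroup.mem_zpowers τ), fun h g hg ↦ ?_⟩
  exact Subgroup.zpowers_le.mpr (show τ ∈ MulAction.stabilizer (L ≃ₐ[K] L) x from h) hg

variable [FiniteDimensional K L]

theorem finrank_fixedField_zpowers (τ : L ≃ₐ[K] L) :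
    Module.finrank (fixedField (Subgroup.zpowers τ)) L = orderOf τ := by
  rw [finrank_fixedField_eq_card, Nat.card_zpowers]

noncomputable def finEquivAlgEquivFixedField (τ : L ≃ₐ[K] L) :
    Fin (orderOf τ) ≃ (L ≃ₐ[fixedField (Subgroup.zpowers τ)] L) :=
  (finEquivZPowers (isOfFinOrder_of_finite τ)).trans (subgroupEquivAlgEquiv _).toEquiv

variable [IsGalois K L]

theorem algebraMap_norm_fixedField_zpowers (τ : L ≃ₐ[K] L) (x : L) :
    algebraMap _ L (Algebra.norm (fixedField (Subgroup.zpowers τ)) x)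
      = ∏ i ∈ range (orderOf τ), (τ ^ i) x := by
  rw [Algebra.norm_eq_prod_automorphisms, ← (finEquivAlgEquivFixedField τ).prod_comp,
    ← Fin.prod_univ_eq_prod_range (fun i ↦ (τ ^ i) x)]
  rfl

theorem algebraMap_trace_fixedField_zpowers (τ : L ≃ₐ[K] L) (x : L) :
    algebraMap _ L (Algebra.trace (fixedField (Subgroup.zpowers τ)) L x)
      = ∑ i ∈ range (orderOf τ), (τ ^ i) x := by
  rw [trace_eq_sum_automorphisms, ← (finEquivAlgEquivFixedField τ).sum_comp,
    ← Fin.sum_univ_eq_sum_range (fun i ↦ (τ ^ i) x)]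
  rfl

end FixedFieldZPowers

theorem galoisAltForm_apply_eq_trace (b : L) (σ : L ≃ₐ[K] L) (x y : L) :
    galoisAltForm b σ x y = Algebra.trace K L ((σ.symm (b * x) - b * σ x) * y) := by
  have h : b * (x * σ y - σ x * y) = σ (σ.symm (b * x) * y) - b * σ x * y := by
    rw [map_mul, AlgEquiv.apply_symm_apply]
    ring
  show Algebra.trace K L (b * (x * σ y - σ x * y)) = _
  rw [h, map_sub, Algebra.trace_eq_of_algEquiv, sub_mul, map_sub]

section Radical

variable [FiniteDimensional K L] [Algebra.IsSeparable K L]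

theorem mem_ker_galoisAltForm_iff {b : L} {σ : L ≃ₐ[K] L} {x : L} :
    x ∈ LinearMap.ker (galoisAltForm b σ) ↔ b * x = σ b * (σ ^ 2) x := by
  rw [sq, AlgEquiv.mul_apply, ← map_mul, ← AlgEquiv.symm_apply_eq, ← sub_eq_zero,
    LinearMap.mem_ker]
  constructor
  · intro h
    refine (traceForm_nondegenerate K L).1 _ fun y ↦ ?_
    rw [Algebra.traceForm_apply, ← galoisAltForm_apply_eq_trace, h, LinearMap.zero_apply]
  · intro h
    ext y
    rw [galoisAltForm_apply_eq_trace, h, zero_mul, map_zero, LinearMap.zero_apply]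

theorem finrank_ker_galoisAltForm_of_ne_bot {b : L} (hb : b ≠ 0) {σ : L ≃ₐ[K] L}
    (hker : LinearMap.ker (galoisAltForm b σ) ≠ ⊥) :
    Module.finrank K (LinearMap.ker (galoisAltForm b σ))
      = Module.finrank K (fixedField (Subgroup.zpowers (σ ^ 2))) := by
  obtain ⟨x₀, hx₀, hx₀0⟩ := (Submodule.ne_bot_iff _).1 hker
  rw [mem_ker_galoisAltForm_iff] at hx₀
  have hσb : σ b ≠ 0 := (map_ne_zero σ).2 hb
  let φ : fixedField (Subgroup.zpowers (σ ^ 2)) →ₗ[K] L :=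
    LinearMap.mulRight K x₀ ∘ₗ (fixedField (Subgroup.zpowers (σ ^ 2))).val.toLinearMap
  have hφ : Function.Injective φ := fun f g hfg ↦ Subtype.ext (mul_right_cancel₀ hx₀0 hfg)
  have hrange : LinearMap.range φ = LinearMap.ker (galoisAltForm b σ) := by
    ext x
    rw [mem_ker_galoisAltForm_iff]
    constructor
    · rintro ⟨f, rfl⟩
      have hf := (mem_fixedField_zpowers_iff _ _).1 f.2
      show b * (f * x₀) = σ b * (σ ^ 2) (f * x₀)
      rw [map_mul, hf, mul_left_comm, hx₀]
      ring
    · intro hx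
      refine ⟨⟨x / x₀, (mem_fixedField_zpowers_iff _ _).2 ?_⟩, div_mul_cancel₀ x hx₀0⟩
      have h1 : (σ ^ 2) x = b * x / σ b := by rw [hx]; field_simp
      have h2 : (σ ^ 2) x₀ = b * x₀ / σ b := by rw [hx₀]; field_simp
      rw [map_div₀, h1, h2]
      field_simp
  rw [← hrange, LinearMap.finrank_range_of_inj hφ]

end Radical

theorem ker_galoisAltForm_eq_bot [FiniteDimensional K L] [IsGalois K L] {b : L} {σ : L ≃ₐ[K] L}
    (hb : σ (∏ i ∈ range (orderOf (σ ^ 2)), ((σ ^ 2) ^ i) b)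
      ≠ ∏ i ∈ range (orderOf (σ ^ 2)), ((σ ^ 2) ^ i) b) :
    LinearMap.ker (galoisAltForm b σ) = ⊥ := by
  refine (Submodule.eq_bot_iff _).2 fun x hx ↦ by_contra fun hx0 ↦ hb ?_
  rw [mem_ker_galoisAltForm_iff] at hx
  set F := fixedField (Subgroup.zpowers (σ ^ 2))
  let τ : L ≃ₐ[F] L := subgroupEquivAlgEquiv _ ⟨σ ^ 2, Subgroup.mem_zpowers _⟩
  have hnorm : Algebra.norm F b = Algebra.norm F (σ b) := by
    have h := congrArg (Algebra.norm F) hx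
    rw [map_mul, map_mul, show (σ ^ 2) x = τ x from rfl, Algebra.norm_eq_of_algEquiv] at h
    exact mul_right_cancel₀ (Algebra.norm_ne_zero_iff.2 hx0) h
  have hcomm : ∀ i : ℕ, ((σ ^ 2) ^ i) (σ b) = σ (((σ ^ 2) ^ i) b) := fun i ↦ by
    rw [← AlgEquiv.mul_apply, ← ((Commute.self_pow σ 2).pow_right i).eq, AlgEquiv.mul_apply]
  calc σ (∏ i ∈ range (orderOf (σ ^ 2)), ((σ ^ 2) ^ i) b)
      = ∏ i ∈ range (orderOf (σ ^ 2)), ((σ ^ 2) ^ i) (σ b) := by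
        rw [map_prod]
        exact prod_congr rfl fun i _ ↦ (hcomm i).symm
    _ = algebraMap F L (Algebra.norm F (σ b)) := (algebraMap_norm_fixedField_zpowers _ _).symm
    _ = _ := by rw [← hnorm, algebraMap_norm_fixedField_zpowers]

theorem exists_prod_algebraMap_add_not_fixed [Infinite K] {ι : Type*} (s : Finset ι) (a : ι → L)
    (σ : L ≃ₐ[K] L) (ha : σ (∑ i ∈ s, a i) ≠ ∑ i ∈ s, a i) :
    ∃ t : K, σ (∏ i ∈ s, (algebraMap K L t + a i)) ≠ ∏ i ∈ s, (algebraMap K L t + a i) := by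
  by_contra! h
  have hPQ : ∏ i ∈ s, (X + C (a i)) = ∏ i ∈ s, (X + C (σ (a i))) := by
    refine Polynomial.eq_of_infinite_eval_eq _ _
      ((Set.infinite_range_of_injective (algebraMap K L).injective).mono ?_)
    rintro _ ⟨t, rfl⟩
    simp only [Set.mem_ofPred_eq, eval_prod, eval_add, eval_X, eval_C]
    rw [← h t, map_prod]
    simp only [map_add, AlgEquiv.commutes]
  apply ha
  have h := congrArg nextCoeff hPQ
  simp only [Monic.nextCoeff_prod _ _ (fun i _ ↦ monic_X_add_C _), nextCoeff_X_add_C] at h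
  rw [map_sum, ← h]

theorem exists_prod_zpowers_sq_not_fixed [FiniteDimensional K L] [IsGalois K L]
    (σ : L ≃ₐ[K] L) (hσ : Even (orderOf σ)) :
    ∃ b : L, σ (∏ i ∈ range (orderOf (σ ^ 2)), ((σ ^ 2) ^ i) b)
      ≠ ∏ i ∈ range (orderOf (σ ^ 2)), ((σ ^ 2) ^ i) b := by
  set F := fixedField (Subgroup.zpowers (σ ^ 2))
  obtain ⟨d, hdF, hd⟩ : ∃ d ∈ F, σ d ≠ d := by
    by_contra! h
    refine notMem_zpowers_sq_of_even_orderOf hσ ?_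
    rw [← fixingSubgroup_fixedField (Subgroup.zpowers (σ ^ 2))]
    exact (mem_fixingSubgroup_iff _ _).2 h
  rcases finite_or_infinite K with hK | hK
  · have : Finite L := Module.finite_of_finite K
    obtain ⟨b, hb⟩ := FiniteField.norm_surjective F L ⟨d, hdF⟩
    refine ⟨b, ?_⟩
    rwa [← algebraMap_norm_fixedField_zpowers, hb]
  · obtain ⟨z, hz⟩ := Algebra.trace_surjective F L ⟨d, hdF⟩
    have hsum : σ (∑ i ∈ range (orderOf (σ ^ 2)), ((σ ^ 2) ^ i) z)
        ≠ ∑ i ∈ range (orderOf (σ ^ 2)), ((σ ^ 2) ^ i) z := by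
      rwa [← algebraMap_trace_fixedField_zpowers, hz]
    obtain ⟨t, ht⟩ := exists_prod_algebraMap_add_not_fixed _ _ σ hsum
    refine ⟨algebraMap K L t + z, ?_⟩
    simpa only [map_add, AlgEquiv.commutes] using ht

theorem statement5_general [FiniteDimensional K L] [IsGalois K L]
    (n : ℕ) (hn : Module.finrank K L = n)
    (σ : L ≃ₐ[K] L) (r : ℕ) (hord : orderOf σ = 2 * r) :
    (∀ b : L, b ≠ 0 →
        formRank (galoisAltForm b σ) = n - n / r ∨ formRank (galoisAltForm b σ) = n) ∧
    (∃ b : L, b ≠ 0 ∧ formRank (galoisAltForm b σ) = n - n / r) ∧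
    (∃ b : L, b ≠ 0 ∧ formRank (galoisAltForm b σ) = n) := by
  have hr : 0 < r := by
    have := orderOf_pos σ
    omega
  have hτ : orderOf (σ ^ 2) = r := by
    rw [orderOf_pow_of_dvd two_ne_zero ⟨r, hord⟩, hord, Nat.mul_div_cancel_left r two_pos]
  have hdim : Module.finrank K (fixedField (Subgroup.zpowers (σ ^ 2))) = n / r := by
    rw [← hn, ← Module.finrank_mul_finrank K (fixedField (Subgroup.zpowers (σ ^ 2))) L,
      finrank_fixedField_zpowers, hτ, Nat.mul_div_cancel _ hr]
  have rank_of_ne_bot : ∀ b : L, b ≠ 0 → LinearMap.ker (galoisAltForm b σ) ≠ ⊥ →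
      formRank (galoisAltForm b σ) = n - n / r := fun b hb hker ↦ by
    rw [formRank, finrank_ker_galoisAltForm_of_ne_bot hb hker, hdim, hn]
  have rank_of_eq_bot : ∀ b : L, LinearMap.ker (galoisAltForm b σ) = ⊥ →
      formRank (galoisAltForm b σ) = n := fun b hker ↦ by
    rw [formRank, hker, finrank_bot, hn, Nat.sub_zero]
  refine ⟨fun b hb ↦ ?_, ⟨1, one_ne_zero, rank_of_ne_bot 1 one_ne_zero ?_⟩, ?_⟩
  · by_cases hker : LinearMap.ker (galoisAltForm b σ) = ⊥
    exacts [.inr (rank_of_eq_bot b hker), .inl (rank_of_ne_bot b hb hker)]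
  · exact (Submodule.ne_bot_iff _).2 ⟨1, mem_ker_galoisAltForm_iff.2 (by simp), one_ne_zero⟩
  · obtain ⟨b, hb⟩ := exists_prod_zpowers_sq_not_fixed σ ⟨r, by rw [hord, two_mul]⟩
    have hb0 : b ≠ 0 := by
      rintro rfl
      exact hb (by simp only [map_zero, map_prod])
    exact ⟨b, hb0, rank_of_eq_bot b (ker_galoisAltForm_eq_bot hb)⟩

/-- if `σ` has even order `2r > 2`, then every nonzero `b` gives a form
`f_{b,σ}` of rank `n − n/r` or `n`, and both ranks occur for suitable nonzero `b`. -/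
theorem statement5 [FiniteDimensional K L] [IsGalois K L]
    (n : ℕ) (hn : Module.finrank K L = n)
    (σ : L ≃ₐ[K] L) (r : ℕ) (hr : 2 ≤ r) (hord : orderOf σ = 2 * r) :
    (∀ b : L, b ≠ 0 →
        formRank (galoisAltForm b σ) = n - n / r ∨ formRank (galoisAltForm b σ) = n) ∧
    (∃ b : L, b ≠ 0 ∧ formRank (galoisAltForm b σ) = n - n / r) ∧
    (∃ b : L, b ≠ 0 ∧ formRank (galoisAltForm b σ) = n) :=
  statement5_general n hn σ r hord
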